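/- Let Λ be a pre-action on (K, A) with cofactor Ω, and let Ξ be the associated 3-cochain. Then Ξ is a 3-cocycle: for all four composable arrows ξ₁, ξ₂, ξ₃, ξ₄ of K and every object a of A, Λ_{ξ₁}⁻¹(Ξ(ξ₂,ξ₃,ξ₄,Λ_{ξ₁}(a)))·Ξ(ξ₁ξ₂,ξ₃,ξ₄,a)⁻¹·Ξ(ξ₁,ξ₂ξ₃,ξ₄,a)·Ξ(ξ₁,ξ₂,ξ₃ξ₄,a)⁻¹·Ξ(ξ₁,ξ₂,ξ₃,a) = 1_a. -/
import Mathlib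

open CategoryTheory
universe v u v' u'
variable {K : Type u} [Groupoid K] {A : Type u'} [Groupoid A]
structure PreAction (K : Type u) (A : Type u') [Groupoid K] [Groupoid A] where
  map : ∀ {x y : K}, (x ⟶ y) → (A ⥤ A)
  inv : ∀ {x y : K}, (x ⟶ y) → (A ⥤ A)
  comp_inv : ∀ {x y : K} (ξ : x ⟶ y), map ξ ⋙ inv ξ = 𝟭 A
  inv_comp : ∀ {x y : K} (ξ : x ⟶ y), inv ξ ⋙ map ξ = 𝟭 A
  map_id : ∀ x : K, map (𝟙 x) = 𝟭 A
namespace PreAction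
variable (P : PreAction K A)
theorem inv_id (x : K) : P.inv (𝟙 x) = 𝟭 A := by
  have h := P.inv_comp (𝟙 x); rw [P.map_id, Functor.comp_id] at h; exact h
@[simp] theorem inv_map_obj {x y : K} (ξ : x ⟶ y) (a : A) :
    (P.inv ξ).obj ((P.map ξ).obj a) = a := Functor.congr_obj (P.comp_inv ξ) a
@[simp] theorem map_inv_obj {x y : K} (ξ : x ⟶ y) (a : A) :
    (P.map ξ).obj ((P.inv ξ).obj a) = a := Functor.congr_obj (P.inv_comp ξ) a
@[simp] theorem map_id_obj (x : K) (a : A) : (P.map (𝟙 x)).obj a = a :=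
  Functor.congr_obj (P.map_id x) a
@[simp] theorem inv_id_obj (x : K) (a : A) : (P.inv (𝟙 x)).obj a = a :=
  Functor.congr_obj (P.inv_id x) a
theorem cof_obj_id_left {x y : K} (η : x ⟶ y) (a : A) :
    a = (P.inv (𝟙 x ≫ η)).obj ((P.map η).obj ((P.map (𝟙 x)).obj a)) := by
  rw [Category.id_comp]; simp
theorem cof_obj_id_right {x y : K} (ξ : x ⟶ y) (a : A) :
    a = (P.inv (ξ ≫ 𝟙 y)).obj ((P.map (𝟙 y)).obj ((P.map ξ).obj a)) := by
  rw [Category.comp_id]; simp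
end PreAction
structure Cofactor (P : PreAction K A) where
  Ω : ∀ {x y z : K} (ξ : x ⟶ y) (η : y ⟶ z) (a : A),
      a ⟶ (P.inv (ξ ≫ η)).obj ((P.map η).obj ((P.map ξ).obj a))
  naturality : ∀ {x y z : K} (ξ : x ⟶ y) (η : y ⟶ z) {a b : A} (h : a ⟶ b),
      h ≫ Ω ξ η b = Ω ξ η a ≫ (P.inv (ξ ≫ η)).map ((P.map η).map ((P.map ξ).map h))
  id_left : ∀ {x y : K} (η : x ⟶ y) (a : A),
      Ω (𝟙 x) η a = eqToHom (P.cof_obj_id_left η a)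
  id_right : ∀ {x y : K} (ξ : x ⟶ y) (a : A),
      Ω ξ (𝟙 y) a = eqToHom (P.cof_obj_id_right ξ a)
def IsGenCocycle {P : PreAction K A} (C : Cofactor P) : Prop :=
  ∀ {x y z w : K} (ξ : x ⟶ y) (η : y ⟶ z) (ζ : z ⟶ w) (a : A),
    C.Ω ξ η a ≫
      C.Ω (ξ ≫ η) ζ ((P.inv (ξ ≫ η)).obj ((P.map η).obj ((P.map ξ).obj a))) ≫
      eqToHom (by simp) =
    eqToHom (by simp) ≫
      (P.inv ξ).map (C.Ω η ζ ((P.map ξ).obj a)) ≫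
      C.Ω ξ (η ≫ ζ)
        ((P.inv ξ).obj ((P.inv (η ≫ ζ)).obj ((P.map ζ).obj ((P.map η).obj ((P.map ξ).obj a)))))

variable {P : PreAction K A} (C : Cofactor P)


/-- The 3-cochain `Ξ` associated to a pre-action with cofactor `(Λ, Ω)`:
`Ξ(ξ,η,ζ,a) = Ω(ξ,η,a)·Ω(ξη,ζ,Λ_{ξη}⁻¹Λ_ηΛ_ξ(a))·Ω(ξ,ηζ,Λ_ξ⁻¹Λ_{ηζ}⁻¹Λ_ζΛ_ηΛ_ξ(a))⁻¹·Λ_ξ⁻¹(Ω(η,ζ,Λ_ξ(a)))⁻¹`,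
an automorphism of `a` (strict identifications of objects recorded by `eqToHom`). -/
def Xi {P : PreAction K A} (C : Cofactor P) {x y z w : K}
    (ξ : x ⟶ y) (η : y ⟶ z) (ζ : z ⟶ w) (a : A) : a ⟶ a :=
  C.Ω ξ η a ≫
    C.Ω (ξ ≫ η) ζ ((P.inv (ξ ≫ η)).obj ((P.map η).obj ((P.map ξ).obj a))) ≫
    eqToHom (by simp) ≫
    Groupoid.inv (C.Ω ξ (η ≫ ζ)
      ((P.inv ξ).obj ((P.inv (η ≫ ζ)).obj
        ((P.map ζ).obj ((P.map η).obj ((P.map ξ).obj a)))))) ≫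
    Groupoid.inv ((P.inv ξ).map (C.Ω η ζ ((P.map ξ).obj a))) ≫
    eqToHom (by simp)

section Helpers

theorem aux_ginv_comp {a b c : A} (u : a ⟶ b) (v : b ⟶ c) :
    Groupoid.inv (u ≫ v) = Groupoid.inv v ≫ Groupoid.inv u := by
  simp [Groupoid.inv_eq_inv]

theorem aux_ginv_eqToHom {a b : A} (h : a = b) :
    Groupoid.inv (eqToHom h) = eqToHom h.symm := by
  subst h; simp [Groupoid.inv_eq_inv]

theorem aux_map_ginv (F : A ⥤ A) {a b : A} (u : a ⟶ b) :
    F.map (Groupoid.inv u) = Groupoid.inv (F.map u) := by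
  simp [Groupoid.inv_eq_inv]

theorem aux_ginv_ginv {a b : A} (u : a ⟶ b) :
    Groupoid.inv (Groupoid.inv u) = u := by
  simp [Groupoid.inv_eq_inv]

theorem aux_inv_swap {a b c d : A} {u : a ⟶ b} {w : a ⟶ c} {w' : b ⟶ d} {v : c ⟶ d}
    (h : u ≫ w' = w ≫ v) : v ≫ Groupoid.inv w' = Groupoid.inv w ≫ u := by
  rw [Groupoid.inv_eq_inv, Groupoid.inv_eq_inv, IsIso.comp_inv_eq, Category.assoc, h,
    IsIso.inv_hom_id_assoc]

theorem aux_map_inv_map {x y : K} (ξ : x ⟶ y) {a b : A} (h : a ⟶ b) :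
    (P.map ξ).map ((P.inv ξ).map h) = eqToHom (by simp) ≫ h ≫ eqToHom (by simp) :=
  Functor.congr_hom (P.inv_comp ξ) h

theorem aux_inv_map_map {x y : K} (ξ : x ⟶ y) {a b : A} (h : a ⟶ b) :
    (P.inv ξ).map ((P.map ξ).map h) = eqToHom (by simp) ≫ h ≫ eqToHom (by simp) :=
  Functor.congr_hom (P.comp_inv ξ) h

theorem aux_P_inv_congr {x y : K} {ρ σ : x ⟶ y} (h : ρ = σ) {a b : A} (u : a ⟶ b) :
    (P.inv ρ).map u = eqToHom (by rw [h]) ≫ (P.inv σ).map u ≫ eqToHom (by rw [h]) :=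
  Functor.congr_hom (by rw [h]) u

theorem aux_P_map_congr {x y : K} {ρ σ : x ⟶ y} (h : ρ = σ) {a b : A} (u : a ⟶ b) :
    (P.map ρ).map u = eqToHom (by rw [h]) ≫ (P.map σ).map u ≫ eqToHom (by rw [h]) :=
  Functor.congr_hom (by rw [h]) u

/-- The comparison morphism `W(ξ,η)(a) : Λ_{ξη}(a) ⟶ Λ_η(Λ_ξ(a))`. -/
def W {x y z : K} (ξ : x ⟶ y) (η : y ⟶ z) (a : A) :
    (P.map (ξ ≫ η)).obj a ⟶ (P.map η).obj ((P.map ξ).obj a) :=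
  (P.map (ξ ≫ η)).map (C.Ω ξ η a) ≫ eqToHom (by simp)

theorem aux_omega_W {x y z : K} (ξ : x ⟶ y) (η : y ⟶ z) (a : A) :
    (P.map (ξ ≫ η)).map (C.Ω ξ η a) = W C ξ η a ≫ eqToHom (by simp) := by
  simp [W]

theorem aux_W_natural {x y z : K} (ξ : x ⟶ y) (η : y ⟶ z) {a b : A} (h : a ⟶ b) :
    (P.map (ξ ≫ η)).map h ≫ W C ξ η b = W C ξ η a ≫ (P.map η).map ((P.map ξ).map h) := by
  unfold W
  rw [← Category.assoc, ← Functor.map_comp, C.naturality, Functor.map_comp,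
    aux_map_inv_map]
  simp

theorem aux_W_natural_inv {x y z : K} (ξ : x ⟶ y) (η : y ⟶ z) {a b : A} (h : a ⟶ b) :
    (P.map η).map ((P.map ξ).map h) ≫ Groupoid.inv (W C ξ η b) =
      Groupoid.inv (W C ξ η a) ≫ (P.map (ξ ≫ η)).map h :=
  aux_inv_swap (aux_W_natural C ξ η h)

theorem aux_omega_inv_natural {x y z : K} (ξ : x ⟶ y) (η : y ⟶ z) {a b : A} (h : a ⟶ b) :
    (P.inv (ξ ≫ η)).map ((P.map η).map ((P.map ξ).map h)) ≫ Groupoid.inv (C.Ω ξ η b) =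
      Groupoid.inv (C.Ω ξ η a) ≫ h :=
  aux_inv_swap (C.naturality ξ η h)

end Helpers
section Helpers2

/-- `Y(ξ,η,ζ)(a) : Λ_ζ(Λ_{ξη}(a)) ⟶ Λ_{ηζ}(Λ_ξ(a))`, the associator-type comparison. -/
def Yhom {v w x y : K} (ξ : v ⟶ w) (η : w ⟶ x) (ζ : x ⟶ y) (a : A) :
    (P.map ζ).obj ((P.map (ξ ≫ η)).obj a) ⟶ (P.map (η ≫ ζ)).obj ((P.map ξ).obj a) :=
  (P.map ζ).map (W C ξ η a) ≫ Groupoid.inv (W C η ζ ((P.map ξ).obj a))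

theorem aux_Y_natural {v w x y : K} (ξ : v ⟶ w) (η : w ⟶ x) (ζ : x ⟶ y)
    {a b : A} (h : a ⟶ b) :
    (P.map ζ).map ((P.map (ξ ≫ η)).map h) ≫ Yhom C ξ η ζ b =
      Yhom C ξ η ζ a ≫ (P.map (η ≫ ζ)).map ((P.map ξ).map h) := by
  unfold Yhom
  rw [← Category.assoc, ← Functor.map_comp, aux_W_natural, Functor.map_comp, Category.assoc,
    aux_W_natural_inv, Category.assoc]

theorem aux_omega_conj {x y z : K} (ξ : x ⟶ y) (η : y ⟶ z) {a : A} (v : a ⟶ a) :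
    C.Ω ξ η a ≫ (P.inv (ξ ≫ η)).map ((P.map η).map ((P.map ξ).map v)) ≫
      Groupoid.inv (C.Ω ξ η a) = v := by
  rw [← Category.assoc, ← C.naturality, Category.assoc]
  simp

theorem aux_inv_omega_comp_omega {x y z : K} {ξ ξ' : x ⟶ y} {η η' : y ⟶ z}
    (h1 : ξ = ξ') (h2 : η = η') (a : A) :
    Groupoid.inv (C.Ω ξ η a) ≫ C.Ω ξ' η' a = eqToHom (by rw [h1, h2]) := by
  subst h1; subst h2; simp

end Helpers2
section Helpers3

theorem aux_Xi_eq {x y z w : K} (ξ : x ⟶ y) (η : y ⟶ z) (ζ : z ⟶ w) (a : A) :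
    Xi C ξ η ζ a =
      C.Ω (ξ ≫ η) ζ a ≫ eqToHom (by simp) ≫
        (P.inv (ξ ≫ η ≫ ζ)).map (Yhom C ξ η ζ a) ≫ Groupoid.inv (C.Ω ξ (η ≫ ζ) a) := by
  have h' := C.naturality ξ (η ≫ ζ)
    (eqToHom (show a = (P.inv ξ).obj ((P.map ξ).obj a) by simp) ≫
      (P.inv ξ).map (C.Ω η ζ ((P.map ξ).obj a)))
  have tail := congrArg Groupoid.inv h'
  rw [aux_ginv_comp, aux_ginv_comp, aux_ginv_comp, aux_ginv_eqToHom] at tail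
  unfold Xi
  rw [← Category.assoc, C.naturality (ξ ≫ η) ζ (C.Ω ξ η a)]
  simp only [Category.assoc]
  rw [tail]
  rw [aux_omega_W, ← aux_map_ginv, aux_P_inv_congr (Category.assoc ξ η ζ)]
  simp [Yhom, aux_map_inv_map, aux_omega_W, aux_ginv_comp, aux_ginv_eqToHom, eqToHom_map,
    aux_map_ginv]

end Helpers3
section Helpers4

theorem aux_XiW {x y z w : K} (ξ : x ⟶ y) (η : y ⟶ z) (ζ : z ⟶ w) (a : A) :
    W C (ξ ≫ η) ζ a ≫ Yhom C ξ η ζ a =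
      eqToHom (by simp) ≫ (P.map (ξ ≫ η ≫ ζ)).map (Xi C ξ η ζ a) ≫ W C ξ (η ≫ ζ) a := by
  rw [aux_Xi_eq]
  rw [Functor.map_comp, Functor.map_comp, Functor.map_comp]
  rw [aux_map_inv_map (ξ ≫ η ≫ ζ) (Yhom C ξ η ζ a)]
  rw [aux_P_map_congr (Category.assoc ξ η ζ).symm (C.Ω (ξ ≫ η) ζ a), aux_omega_W]
  rw [aux_map_ginv, aux_omega_W]
  simp [aux_ginv_comp, aux_ginv_eqToHom, eqToHom_map]

end Helpers4
section Helpers5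

theorem aux_Xi_natural {x y z w : K} (ξ : x ⟶ y) (η : y ⟶ z) (ζ : z ⟶ w)
    {a b : A} (v : a ⟶ b) :
    v ≫ Xi C ξ η ζ b = Xi C ξ η ζ a ≫ v := by
  rw [aux_Xi_eq, aux_Xi_eq]
  rw [← Category.assoc, C.naturality (ξ ≫ η) ζ v]
  rw [aux_P_inv_congr (Category.assoc ξ η ζ) ((P.map ζ).map ((P.map (ξ ≫ η)).map v))]
  simp only [Category.assoc, eqToHom_trans_assoc, eqToHom_trans, eqToHom_refl, Category.comp_id, Category.id_comp]
  rw [← Category.assoc ((P.inv (ξ ≫ η ≫ ζ)).map _), ← Functor.map_comp, aux_Y_natural,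
    Functor.map_comp]
  simp only [Category.assoc]
  rw [aux_omega_inv_natural]

end Helpers5
section Helpers6

theorem aux_E1 {v w x y z : K} (ξ : v ⟶ w) (η : w ⟶ x) (ζ : x ⟶ y) (θ : y ⟶ z) (a : A) :
    Yhom C (ξ ≫ η) ζ θ a ≫ Yhom C ξ η (ζ ≫ θ) a =
      (P.map θ).map (W C (ξ ≫ η) ζ a ≫ Yhom C ξ η ζ a) ≫
        Yhom C η ζ θ ((P.map ξ).obj a) ≫
        Groupoid.inv (W C η (ζ ≫ θ) ((P.map ξ).obj a)) := by
  unfold Yhom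
  simp only [Category.assoc]
  slice_lhs 2 3 => rw [← aux_W_natural_inv]
  simp [Functor.map_comp, aux_map_ginv, Groupoid.inv_eq_inv]

end Helpers6
section Helpers7

theorem aux_ginv_cancel {a b c : A} (u : a ⟶ b) (g : b ⟶ c) :
    Groupoid.inv u ≫ u ≫ g = g := by
  rw [← Category.assoc]; simp

theorem aux_cancel_ginv {a b c : A} (u : a ⟶ b) (g : a ⟶ c) :
    u ≫ Groupoid.inv u ≫ g = g := by
  rw [← Category.assoc]; simp

theorem aux_inv_omega_comp_omega_assoc {x y z : K} {ξ ξ' : x ⟶ y} {η η' : y ⟶ z}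
    (h1 : ξ = ξ') (h2 : η = η') (a : A) {c : A}
    (g : (P.inv (ξ' ≫ η')).obj ((P.map η').obj ((P.map ξ').obj a)) ⟶ c) :
    Groupoid.inv (C.Ω ξ η a) ≫ C.Ω ξ' η' a ≫ g = eqToHom (by rw [h1, h2]) ≫ g := by
  subst h1; subst h2; rw [← Category.assoc]; simp

theorem aux_E2 {x₀ x₁ x₂ x₃ x₄ : K} (ξ₁ : x₀ ⟶ x₁) (ξ₂ : x₁ ⟶ x₂) (ξ₃ : x₂ ⟶ x₃)
    (ξ₄ : x₃ ⟶ x₄) (a : A) :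
    eqToHom (by simp) ≫ Groupoid.inv (Yhom C ξ₁ (ξ₂ ≫ ξ₃) ξ₄ a) ≫ eqToHom (by simp) ≫
      Yhom C (ξ₁ ≫ ξ₂) ξ₃ ξ₄ a ≫ Yhom C ξ₁ ξ₂ (ξ₃ ≫ ξ₄) a =
      (P.map (ξ₂ ≫ ξ₃ ≫ ξ₄)).map
        (Xi C ξ₂ ξ₃ ξ₄ ((P.map ξ₁).obj a) ≫ (P.map ξ₁).map (Xi C ξ₁ ξ₂ ξ₃ a)) := by
  rw [show Groupoid.inv (Yhom C ξ₁ (ξ₂ ≫ ξ₃) ξ₄ a) =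
      W C (ξ₂ ≫ ξ₃) ξ₄ ((P.map ξ₁).obj a) ≫
        Groupoid.inv ((P.map ξ₄).map (W C ξ₁ (ξ₂ ≫ ξ₃) a)) from by
    rw [Yhom, aux_ginv_comp, aux_ginv_ginv]]
  rw [aux_E1 C ξ₁ ξ₂ ξ₃ ξ₄ a]
  rw [aux_XiW C ξ₁ ξ₂ ξ₃ a]
  simp only [Functor.map_comp, eqToHom_map, Category.assoc, eqToHom_trans_assoc, eqToHom_refl,
    Category.id_comp]
  slice_lhs 4 5 => rw [← Functor.map_comp, aux_W_natural C ξ₁ (ξ₂ ≫ ξ₃) (Xi C ξ₁ ξ₂ ξ₃ a),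
    Functor.map_comp]
  simp only [Category.assoc]
  rw [aux_ginv_cancel]
  slice_lhs 3 4 => rw [aux_Y_natural C ξ₂ ξ₃ ξ₄ ((P.map ξ₁).map (Xi C ξ₁ ξ₂ ξ₃ a))]
  simp only [Category.assoc]
  slice_lhs 4 5 => rw [aux_W_natural_inv C ξ₂ (ξ₃ ≫ ξ₄) ((P.map ξ₁).map (Xi C ξ₁ ξ₂ ξ₃ a))]
  slice_lhs 2 3 => rw [aux_XiW C ξ₂ ξ₃ ξ₄ ((P.map ξ₁).obj a)]
  simp only [Category.assoc, eqToHom_trans_assoc, eqToHom_refl, Category.id_comp]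
  rw [aux_cancel_ginv]

end Helpers7
section MainAux

theorem aux_main {x₀ x₁ x₂ x₃ x₄ : K} (ξ₁ : x₀ ⟶ x₁) (ξ₂ : x₁ ⟶ x₂) (ξ₃ : x₂ ⟶ x₃)
    (ξ₄ : x₃ ⟶ x₄) (a : A) (Ab : a ⟶ a)
    (hAb : (P.map ξ₁).map Ab = Xi C ξ₂ ξ₃ ξ₄ ((P.map ξ₁).obj a)) :
    Ab ≫ Groupoid.inv (Xi C (ξ₁ ≫ ξ₂) ξ₃ ξ₄ a) ≫ Xi C ξ₁ (ξ₂ ≫ ξ₃) ξ₄ a ≫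
      Groupoid.inv (Xi C ξ₁ ξ₂ (ξ₃ ≫ ξ₄) a) ≫ Xi C ξ₁ ξ₂ ξ₃ a = 𝟙 a := by
  have hZ : Yhom C ξ₁ ξ₂ (ξ₃ ≫ ξ₄) a ≫ eqToHom (by simp) ≫
      Groupoid.inv (Yhom C ξ₁ (ξ₂ ≫ ξ₃) ξ₄ a) ≫ eqToHom (by simp) ≫
      Yhom C (ξ₁ ≫ ξ₂) ξ₃ ξ₄ a =
      (P.map (ξ₃ ≫ ξ₄)).map ((P.map (ξ₁ ≫ ξ₂)).map (Ab ≫ Xi C ξ₁ ξ₂ ξ₃ a)) := by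
    rw [← cancel_mono (Yhom C ξ₁ ξ₂ (ξ₃ ≫ ξ₄) a)]
    simp only [Category.assoc]
    rw [aux_E2 C ξ₁ ξ₂ ξ₃ ξ₄ a]
    rw [aux_Y_natural C ξ₁ ξ₂ (ξ₃ ≫ ξ₄) (Ab ≫ Xi C ξ₁ ξ₂ ξ₃ a)]
    simp only [Functor.map_comp, hAb]
  have H : Xi C ξ₁ ξ₂ (ξ₃ ≫ ξ₄) a ≫ Groupoid.inv (Xi C ξ₁ (ξ₂ ≫ ξ₃) ξ₄ a) ≫
      Xi C (ξ₁ ≫ ξ₂) ξ₃ ξ₄ a = Ab ≫ Xi C ξ₁ ξ₂ ξ₃ a := by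
    rw [aux_Xi_eq C ξ₁ ξ₂ (ξ₃ ≫ ξ₄) a, aux_Xi_eq C ξ₁ (ξ₂ ≫ ξ₃) ξ₄ a,
      aux_Xi_eq C (ξ₁ ≫ ξ₂) ξ₃ ξ₄ a]
    simp only [aux_ginv_comp, aux_ginv_eqToHom, aux_ginv_ginv, Category.assoc]
    rw [aux_inv_omega_comp_omega_assoc (ξ := ξ₁) (ξ' := ξ₁) C rfl (Category.assoc ξ₂ ξ₃ ξ₄).symm a]
    rw [aux_inv_omega_comp_omega_assoc (η := ξ₄) (η' := ξ₄) C (Category.assoc ξ₁ ξ₂ ξ₃).symm rfl a]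
    trans (C.Ω (ξ₁ ≫ ξ₂) (ξ₃ ≫ ξ₄) a ≫
      (P.inv ((ξ₁ ≫ ξ₂) ≫ ξ₃ ≫ ξ₄)).map
        ((P.map (ξ₃ ≫ ξ₄)).map ((P.map (ξ₁ ≫ ξ₂)).map (Ab ≫ Xi C ξ₁ ξ₂ ξ₃ a))) ≫
      Groupoid.inv (C.Ω (ξ₁ ≫ ξ₂) (ξ₃ ≫ ξ₄) a))
    · rw [← hZ]
      simp only [Functor.map_comp, eqToHom_map, aux_map_ginv, Category.assoc,
        eqToHom_trans_assoc, eqToHom_refl, Category.id_comp, aux_ginv_comp, aux_ginv_eqToHom,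
        aux_P_inv_congr (show ξ₁ ≫ ξ₂ ≫ ξ₃ ≫ ξ₄ = (ξ₁ ≫ ξ₂) ≫ ξ₃ ≫ ξ₄ by simp),
        aux_P_inv_congr (show ξ₁ ≫ (ξ₂ ≫ ξ₃) ≫ ξ₄ = (ξ₁ ≫ ξ₂) ≫ ξ₃ ≫ ξ₄ by simp)]
    · exact aux_omega_conj C (ξ₁ ≫ ξ₂) (ξ₃ ≫ ξ₄) (Ab ≫ Xi C ξ₁ ξ₂ ξ₃ a)
  rw [show (𝟙 a : a ⟶ a) = Ab ≫ Groupoid.inv Ab by simp]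
  rw [cancel_epi Ab]
  have hXi1 : Xi C ξ₁ ξ₂ ξ₃ a = Groupoid.inv Ab ≫ Xi C ξ₁ ξ₂ (ξ₃ ≫ ξ₄) a ≫
      Groupoid.inv (Xi C ξ₁ (ξ₂ ≫ ξ₃) ξ₄ a) ≫ Xi C (ξ₁ ≫ ξ₂) ξ₃ ξ₄ a := by
    rw [H, aux_ginv_cancel]
  rw [hXi1]
  have c2 : Groupoid.inv Ab ≫ Groupoid.inv (Xi C ξ₁ ξ₂ (ξ₃ ≫ ξ₄) a) =
      Groupoid.inv (Xi C ξ₁ ξ₂ (ξ₃ ≫ ξ₄) a) ≫ Groupoid.inv Ab :=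
    aux_inv_swap (aux_Xi_natural C ξ₁ ξ₂ (ξ₃ ≫ ξ₄) (Groupoid.inv Ab))
  slice_lhs 3 4 => rw [← c2]
  simp only [Category.assoc]
  rw [aux_ginv_cancel]
  have c3 : Groupoid.inv Ab ≫ Groupoid.inv (Xi C ξ₁ (ξ₂ ≫ ξ₃) ξ₄ a) =
      Groupoid.inv (Xi C ξ₁ (ξ₂ ≫ ξ₃) ξ₄ a) ≫ Groupoid.inv Ab :=
    aux_inv_swap (aux_Xi_natural C ξ₁ (ξ₂ ≫ ξ₃) ξ₄ (Groupoid.inv Ab))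
  slice_lhs 3 4 => rw [c3]
  simp only [Category.assoc]
  rw [aux_cancel_ginv]
  rw [aux_Xi_natural C (ξ₁ ≫ ξ₂) ξ₃ ξ₄ (Groupoid.inv Ab)]
  rw [aux_ginv_cancel]

end MainAux
/-- `Ξ` is a 3-cocycle: for all four composable arrows
`ξ₁, ξ₂, ξ₃, ξ₄` of `K` and every object `a` of `A`,
`Λ_{ξ₁}⁻¹(Ξ(ξ₂,ξ₃,ξ₄,Λ_{ξ₁}(a)))·Ξ(ξ₁ξ₂,ξ₃,ξ₄,a)⁻¹·Ξ(ξ₁,ξ₂ξ₃,ξ₄,a)·Ξ(ξ₁,ξ₂,ξ₃ξ₄,a)⁻¹·Ξ(ξ₁,ξ₂,ξ₃,a) = 1_a`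
(the first factor is conjugated to an automorphism of `a` by `eqToHom`). -/
theorem Xi_is_cocycle (P : PreAction K A) (C : Cofactor P) :
    ∀ {x₀ x₁ x₂ x₃ x₄ : K} (ξ₁ : x₀ ⟶ x₁) (ξ₂ : x₁ ⟶ x₂) (ξ₃ : x₂ ⟶ x₃)
      (ξ₄ : x₃ ⟶ x₄) (a : A),
      (eqToHom (by simp) ≫
        (P.inv ξ₁).map (Xi C ξ₂ ξ₃ ξ₄ ((P.map ξ₁).obj a)) ≫
        eqToHom (by simp)) ≫
      Groupoid.inv (Xi C (ξ₁ ≫ ξ₂) ξ₃ ξ₄ a) ≫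
      Xi C ξ₁ (ξ₂ ≫ ξ₃) ξ₄ a ≫
      Groupoid.inv (Xi C ξ₁ ξ₂ (ξ₃ ≫ ξ₄) a) ≫
      Xi C ξ₁ ξ₂ ξ₃ a = 𝟙 a := by
  intro x₀ x₁ x₂ x₃ x₄ ξ₁ ξ₂ ξ₃ ξ₄ a
  exact aux_main C ξ₁ ξ₂ ξ₃ ξ₄ a _
    (by simp [Functor.map_comp, aux_map_inv_map, eqToHom_map, eqToHom_trans_assoc,
      eqToHom_refl, eqToHom_trans, Category.id_comp, Category.comp_id, Category.assoc])
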